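/- arXiv:1503.05406 — 5 statements merged into one kernel-verified Lean document; each statement's English description precedes it below -/
import Mathlib

section
/- Let 1<p<∞ and let f:[0,∞)→[0,∞) be continuous with lim_{s→0⁺} f(s)/s^{p-1} = 0 and lim_{s→∞} f(s)/s^{p-1} = ∞. Define f̃(s) = s^{p-1}·sup{ f(t)/t^{p-1} : 0 < t ≤ s } + s^p for s > 0. Then f̃ is continuous on (0,∞), f̃(s) ≥ f(s) for all s > 0, the function s ↦ f̃(s)/s^{p-1} is strictly increasing on (0,∞), lim_{s→0⁺} f̃(s)/s^{p-1} = 0, and lim_{s→∞} f̃(s)/s^{p-1} = ∞. -/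
open Real Filter Set Topology

/-- properties of the regularization `f̃(s) = s^(p-1) * sup_{0<t≤s} f(t)/t^(p-1) + s^p`. -/
theorem stmt_0 (p : ℝ) (hp : 1 < p) (f : ℝ → ℝ)
    (hf_cont : ContinuousOn f (Set.Ici 0))
    (hf_nonneg : ∀ s, 0 ≤ s → 0 ≤ f s)
    (hf0 : Tendsto (fun s => f s / s ^ (p - 1)) (nhdsWithin 0 (Set.Ioi 0)) (nhds 0))
    (hfinf : Tendsto (fun s => f s / s ^ (p - 1)) atTop atTop)
    (ftil : ℝ → ℝ)
    (hftil : ∀ s, 0 < s →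
      ftil s = s ^ (p - 1) * sSup ((fun t => f t / t ^ (p - 1)) '' Set.Ioc 0 s) + s ^ p) :
    ContinuousOn ftil (Set.Ioi 0) ∧
    (∀ s, 0 < s → f s ≤ ftil s) ∧
    StrictMonoOn (fun s => ftil s / s ^ (p - 1)) (Set.Ioi 0) ∧
    Tendsto (fun s => ftil s / s ^ (p - 1)) (nhdsWithin 0 (Set.Ioi 0)) (nhds 0) ∧
    Tendsto (fun s => ftil s / s ^ (p - 1)) atTop atTop := by
  set g : ℝ → ℝ := fun t => f t / t ^ (p - 1) with hgdef
  set M : ℝ → ℝ := fun s => sSup (g '' Set.Ioc 0 s) with hMdef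
  -- nonnegativity of g
  have hgn : ∀ t : ℝ, 0 < t → 0 ≤ g t := fun t ht =>
    div_nonneg (hf_nonneg t ht.le) (Real.rpow_nonneg ht.le _)
  -- continuity of g away from 0
  have hgcont : ∀ a b : ℝ, 0 < a → ContinuousOn g (Set.Icc a b) := by
    intro a b ha
    apply ContinuousOn.div
    · exact hf_cont.mono (fun x hx => le_trans ha.le hx.1)
    · exact continuousOn_id.rpow_const (fun x hx => Or.inl (ne_of_gt (lt_of_lt_of_le ha hx.1)))
    · intro x hx
      exact (Real.rpow_pos_of_pos (lt_of_lt_of_le ha hx.1) _).ne'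
  -- from hf0: g is < 1 near 0
  obtain ⟨δ₀, hδ₀, hδ₀'⟩ : ∃ δ > 0, ∀ t : ℝ, 0 < t → t < δ → g t < 1 := by
    rw [Metric.tendsto_nhdsWithin_nhds] at hf0
    obtain ⟨δ, hδ, h⟩ := hf0 1 one_pos
    refine ⟨δ, hδ, fun t ht htδ => ?_⟩
    have := h ht (by rw [Real.dist_eq, sub_zero, abs_of_pos ht]; exact htδ)
    rw [Real.dist_eq, sub_zero] at this
    exact (abs_lt.mp this).2
  -- boundedness
  have hbdd : ∀ s : ℝ, 0 < s → BddAbove (g '' Set.Ioc 0 s) := by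
    intro s hs
    have ha0 : 0 < min (δ₀ / 2) s := lt_min (half_pos hδ₀) hs
    have hsub : g '' Set.Ioc 0 s ⊆ g '' Set.Ioc 0 (min (δ₀ / 2) s) ∪ g '' Set.Icc (min (δ₀ / 2) s) s := by
      rintro y ⟨t, ht, rfl⟩
      rcases le_or_gt t (min (δ₀ / 2) s) with h | h
      · exact Or.inl ⟨t, ⟨ht.1, h⟩, rfl⟩
      · exact Or.inr ⟨t, ⟨h.le, ht.2⟩, rfl⟩
    refine BddAbove.mono hsub (BddAbove.union ⟨1, ?_⟩
      (isCompact_Icc.bddAbove_image (hgcont _ s ha0)))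
    rintro y ⟨t, ht, rfl⟩
    exact (hδ₀' t ht.1 (lt_of_le_of_lt ht.2 (lt_of_le_of_lt (min_le_left _ _) (half_lt_self hδ₀)))).le
  have hne : ∀ s : ℝ, 0 < s → (g '' Set.Ioc 0 s).Nonempty :=
    fun s hs => ⟨g s, s, ⟨hs, le_refl s⟩, rfl⟩
  have hMge : ∀ s t : ℝ, 0 < t → t ≤ s → g t ≤ M s := fun s t ht hts =>
    le_csSup (hbdd s (lt_of_lt_of_le ht hts)) ⟨t, ⟨ht, hts⟩, rfl⟩
  have hMle : ∀ s c : ℝ, 0 < s → (∀ t, 0 < t → t ≤ s → g t ≤ c) → M s ≤ c := by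
    intro s c hs h
    refine csSup_le (hne s hs) ?_
    rintro y ⟨t, ht, rfl⟩
    exact h t ht.1 ht.2
  have hM0 : ∀ s : ℝ, 0 < s → 0 ≤ M s := fun s hs => (hgn s hs).trans (hMge s s hs le_rfl)
  have hMmono : ∀ s₁ s₂ : ℝ, 0 < s₁ → s₁ ≤ s₂ → M s₁ ≤ M s₂ := by
    intro s₁ s₂ h1 h12
    exact csSup_le_csSup (hbdd s₂ (h1.trans_le h12)) (hne s₁ h1)
      (Set.image_mono (Set.Ioc_subset_Ioc_right h12))
  -- the key reformulation
  have hftil' : ∀ s : ℝ, 0 < s → ftil s / s ^ (p - 1) = M s + s := by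
    intro s hs
    have hsp : (0:ℝ) < s ^ (p - 1) := Real.rpow_pos_of_pos hs _
    have hspp : s ^ p / s ^ (p - 1) = s := by
      rw [← Real.rpow_sub hs, show p - (p - 1) = 1 by ring, Real.rpow_one]
    rw [hftil s hs, add_div, hspp, mul_comm, mul_div_assoc, div_self hsp.ne', mul_one]
  -- continuity of M on (0,∞)
  have hMcont : ContinuousOn M (Set.Ioi 0) := by
    intro s₀ hs₀
    have hs₀' : (0:ℝ) < s₀ := hs₀
    rw [Metric.continuousWithinAt_iff]
    intro ε hε
    have hK : IsCompact (Set.Icc (s₀ / 2) (s₀ + 1)) := isCompact_Icc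
    have hgu : UniformContinuousOn g (Set.Icc (s₀ / 2) (s₀ + 1)) :=
      hK.uniformContinuousOn_of_continuous (hgcont _ _ (half_pos hs₀'))
    obtain ⟨δ₁, hδ₁, hδ₁'⟩ := Metric.uniformContinuousOn_iff.mp hgu (ε / 2) (half_pos hε)
    set δ := min δ₁ (min (s₀ / 2) 1) with hδdef
    have hδpos : 0 < δ := lt_min hδ₁ (lt_min (half_pos hs₀') one_pos)
    -- general claim
    have key : ∀ s₁ s₂ : ℝ, s₀ / 2 ≤ s₁ → s₁ ≤ s₂ → s₂ ≤ s₀ + 1 → s₂ - s₁ < δ₁ →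
        M s₂ ≤ M s₁ + ε / 2 := by
      intro s₁ s₂ h1 h12 h2 hd
      have hs₁ : 0 < s₁ := lt_of_lt_of_le (half_pos hs₀') h1
      refine hMle s₂ _ (hs₁.trans_le h12) ?_
      intro t ht hts
      rcases le_or_gt t s₁ with h | h
      · exact (hMge s₁ t ht h).trans (by linarith [half_pos hε])
      · have htK : t ∈ Set.Icc (s₀ / 2) (s₀ + 1) := ⟨h1.trans h.le, hts.trans h2⟩
        have hs₁K : s₁ ∈ Set.Icc (s₀ / 2) (s₀ + 1) := ⟨h1, by linarith⟩
        have hdist : dist t s₁ < δ₁ := by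
          rw [Real.dist_eq, abs_of_pos (by linarith)]
          linarith
        have := hδ₁' t htK s₁ hs₁K hdist
        rw [Real.dist_eq] at this
        have hgt : g t ≤ g s₁ + ε / 2 := by linarith [(abs_lt.mp this).2]
        exact hgt.trans (by linarith [hMge s₁ s₁ hs₁ le_rfl])
    refine ⟨δ, hδpos, ?_⟩
    intro s hs hd
    have hs' : (0:ℝ) < s := hs
    rw [Real.dist_eq] at hd
    have hdδ₁ : |s - s₀| < δ₁ := lt_of_lt_of_le hd (min_le_left _ _)
    have hdhalf : |s - s₀| < s₀ / 2 := lt_of_lt_of_le hd ((min_le_right _ _).trans (min_le_left _ _))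
    have hd1 : |s - s₀| < 1 := lt_of_lt_of_le hd ((min_le_right _ _).trans (min_le_right _ _))
    have habs1 := (abs_lt.mp hdhalf).1
    have habs2 := (abs_lt.mp hd1).2
    rw [Real.dist_eq]
    rcases le_total s s₀ with h | h
    · have h1 : M s ≤ M s₀ := hMmono s s₀ hs' h
      have h2 : M s₀ ≤ M s + ε / 2 :=
        key s s₀ (by linarith) h (by linarith) (by rw [abs_sub_comm] at hdδ₁; linarith [(abs_lt.mp hdδ₁).2])
      rw [abs_lt]; constructor <;> linarith
    · have h1 : M s₀ ≤ M s := hMmono s₀ s hs₀' h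
      have h2 : M s ≤ M s₀ + ε / 2 :=
        key s₀ s (by linarith) h (by linarith [(abs_lt.mp hdδ₁).2]) (by linarith [(abs_lt.mp hdδ₁).2])
      rw [abs_lt]; constructor <;> linarith
  refine ⟨?_, ?_, ?_, ?_, ?_⟩
  · -- continuity of ftil
    have hcont : ContinuousOn (fun s : ℝ => s ^ (p - 1) * M s + s ^ p) (Set.Ioi 0) := by
      apply ContinuousOn.add
      · exact (continuousOn_id.rpow_const (fun x hx => Or.inl (ne_of_gt hx))).mul hMcont
      · exact continuousOn_id.rpow_const (fun x hx => Or.inl (ne_of_gt hx))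
    exact hcont.congr fun s hs => hftil s hs
  · -- f ≤ ftil
    intro s hs
    have hsp : (0:ℝ) < s ^ (p - 1) := Real.rpow_pos_of_pos hs _
    have h1 : g s ≤ M s := hMge s s hs le_rfl
    have h2 : f s = g s * s ^ (p - 1) := by
      rw [hgdef]; field_simp
    rw [h2, hftil s hs]
    have h3 : g s * s ^ (p - 1) ≤ s ^ (p - 1) * M s := by
      rw [mul_comm]; exact mul_le_mul_of_nonneg_left h1 hsp.le
    have h4 : (0:ℝ) ≤ s ^ p := Real.rpow_nonneg hs.le _
    linarith
  · -- strict monotonicity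
    intro s₁ h1 s₂ h2 h12
    have h1' : (0:ℝ) < s₁ := h1
    have h2' : (0:ℝ) < s₂ := h2
    simp only
    rw [hftil' s₁ h1', hftil' s₂ h2']
    have := hMmono s₁ s₂ h1' h12.le
    linarith
  · -- limit at 0
    have hMtend : Tendsto M (nhdsWithin 0 (Set.Ioi 0)) (nhds 0) := by
      rw [Metric.tendsto_nhdsWithin_nhds]
      intro ε hε
      rw [Metric.tendsto_nhdsWithin_nhds] at hf0
      obtain ⟨δ, hδ, h⟩ := hf0 (ε / 2) (half_pos hε)
      refine ⟨δ, hδ, fun s hs hsd => ?_⟩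
      have hs' : (0:ℝ) < s := hs
      rw [Real.dist_eq, sub_zero, abs_of_pos hs'] at hsd
      have hub : M s ≤ ε / 2 := by
        refine hMle s _ hs' ?_
        intro t ht hts
        have := h ht (by rw [Real.dist_eq, sub_zero, abs_of_pos ht]; linarith)
        rw [Real.dist_eq, sub_zero] at this
        exact le_of_lt (lt_of_le_of_lt (le_abs_self _) (lt_of_lt_of_le this (by linarith)))
      rw [Real.dist_eq, sub_zero, abs_of_nonneg (hM0 s hs')]
      linarith
    have hidt : Tendsto (fun s : ℝ => s) (nhdsWithin 0 (Set.Ioi 0)) (nhds 0) :=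
      Filter.Tendsto.mono_left tendsto_id nhdsWithin_le_nhds
    have := hMtend.add hidt
    rw [add_zero] at this
    refine this.congr' ?_
    filter_upwards [self_mem_nhdsWithin] with s hs
    exact (hftil' s hs).symm
  · -- limit at ∞
    refine tendsto_atTop_mono' atTop ?_ tendsto_id
    filter_upwards [eventually_gt_atTop (0:ℝ)] with s hs
    rw [hftil' s hs]
    have := hM0 s hs
    simp only [id]
    linarith
end

section
/- Let 1<p<∞ and let g:(0,∞)→[0,∞) be continuous with lim_{s→∞} g(s)/s^{p-1} < ∞. Define ĝ(s) = s^{p-1}·sup{ g(t)/t^{p-1} : t ≥ s } + 1 for s > 0. Then ĝ is continuous on (0,∞), ĝ(s) > g(s) for all s > 0, the function s ↦ ĝ(s)/s^{p-1} is strictly decreasing on (0,∞), and lim_{s→∞} ĝ(s)/s^{p-1} < ∞. -/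
open Real Filter Set Topology

/-- properties of the regularization `ĝ(s) = s^(p-1) * sup_{t≥s} g(t)/t^(p-1) + 1`. -/
theorem stmt_1 (p : ℝ) (hp : 1 < p) (g : ℝ → ℝ)
    (hg_cont : ContinuousOn g (Set.Ioi 0))
    (hg_nonneg : ∀ s, 0 < s → 0 ≤ g s)
    (hginf : ∃ l : ℝ, Tendsto (fun s => g s / s ^ (p - 1)) atTop (nhds l))
    (ghat : ℝ → ℝ)
    (hghat : ∀ s, 0 < s →
      ghat s = s ^ (p - 1) * sSup ((fun t => g t / t ^ (p - 1)) '' Set.Ici s) + 1) :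
    ContinuousOn ghat (Set.Ioi 0) ∧
    (∀ s, 0 < s → g s < ghat s) ∧
    StrictAntiOn (fun s => ghat s / s ^ (p - 1)) (Set.Ioi 0) ∧
    (∃ l : ℝ, Tendsto (fun s => ghat s / s ^ (p - 1)) atTop (nhds l)) := by
  obtain ⟨l, hl⟩ := hginf
  set f : ℝ → ℝ := fun t => g t / t ^ (p - 1) with hfdef
  have hpow_pos : ∀ s : ℝ, 0 < s → (0:ℝ) < s ^ (p-1) := fun s hs => Real.rpow_pos_of_pos hs _
  have hf_cont : ContinuousOn f (Ioi 0) := by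
    apply hg_cont.div
    · exact fun x hx => (Real.continuousAt_rpow_const x _ (Or.inl (ne_of_gt hx))).continuousWithinAt
    · exact fun x hx => (hpow_pos x hx).ne'
  have hf_nonneg : ∀ s : ℝ, 0 < s → 0 ≤ f s := fun s hs =>
    div_nonneg (hg_nonneg s hs) (hpow_pos s hs).le
  obtain ⟨N, hN⟩ : ∃ N : ℝ, ∀ t ≥ N, f t ≤ l + 1 :=
    eventually_atTop.mp (hl.eventually (eventually_le_nhds (lt_add_one l)))
  have hbdd : ∀ s : ℝ, 0 < s → BddAbove (f '' Ici s) := by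
    intro s hs
    obtain ⟨M, hM⟩ : ∃ M, ∀ x ∈ f '' Icc s (max N s), x ≤ M := by
      rcases ((isCompact_Icc (a := s) (b := max N s)).bddAbove_image
        (hf_cont.mono (fun x hx => lt_of_lt_of_le hs hx.1))) with ⟨M, hM⟩
      exact ⟨M, fun x hx => hM hx⟩
    refine ⟨max M (l + 1), ?_⟩
    rintro x ⟨t, ht, rfl⟩
    rcases le_total t (max N s) with h1 | h1
    · exact le_trans (hM _ (mem_image_of_mem _ ⟨ht, h1⟩)) (le_max_left _ _)
    · exact le_trans (hN t (le_trans (le_max_left _ _) h1)) (le_max_right _ _)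
  have hne : ∀ s : ℝ, (f '' Ici s).Nonempty := fun s => ⟨f s, mem_image_of_mem _ self_mem_Ici⟩
  set h : ℝ → ℝ := fun s => sSup (f '' Ici s) with hhdef
  have h_anti : ∀ s1 s2 : ℝ, 0 < s1 → s1 ≤ s2 → h s2 ≤ h s1 := fun s1 s2 h1 h12 =>
    csSup_le_csSup (hbdd s1 h1) (hne s2) (image_mono (Ici_subset_Ici.mpr h12))
  have h_ge : ∀ s : ℝ, 0 < s → f s ≤ h s := fun s hs =>
    le_csSup (hbdd s hs) (mem_image_of_mem _ self_mem_Ici)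
  -- split lemma
  have hsplit : ∀ s1 s2 : ℝ, 0 < s1 → s1 ≤ s2 →
      h s1 = max (sSup (f '' Icc s1 s2)) (h s2) := by
    intro s1 s2 h1 h12
    have : Ici s1 = Icc s1 s2 ∪ Ici s2 := (Icc_union_Ici_eq_Ici h12).symm
    rw [hhdef]
    simp only
    rw [this, image_union]
    exact csSup_union ((hbdd s1 h1).mono (image_mono Icc_subset_Ici_self))
      ⟨f s1, mem_image_of_mem _ ⟨le_rfl, h12⟩⟩
      (hbdd s2 (lt_of_lt_of_le h1 h12)) (hne s2)
  -- continuity of h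
  have hcont_h : ∀ s0 : ℝ, 0 < s0 → ContinuousAt h s0 := by
    intro s0 hs0
    rw [Metric.continuousAt_iff]
    intro ε hε
    have hfc : ContinuousAt f s0 := hf_cont.continuousAt (Ioi_mem_nhds hs0)
    obtain ⟨δ, hδ, hδf⟩ := Metric.continuousAt_iff.mp hfc (ε/2) (by positivity)
    refine ⟨min δ (s0/2), by positivity, ?_⟩
    intro s hs
    have hsd : |s - s0| < min δ (s0/2) := by rwa [Real.dist_eq] at hs
    have hs_pos : 0 < s := by
      have := lt_of_lt_of_le hsd (min_le_right _ _)
      rw [abs_lt] at this; linarith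
    have hsδ : |s - s0| < δ := lt_of_lt_of_le hsd (min_le_left _ _)
    have hfnear : ∀ t : ℝ, |t - s0| < δ → |f t - f s0| < ε/2 := by
      intro t ht
      have := hδf (x := t) (by rwa [Real.dist_eq])
      rwa [Real.dist_eq] at this
    rw [Real.dist_eq, abs_lt]
    constructor
    · -- -ε < h s - h s0
      rcases le_total s s0 with hle | hle
      · have := h_anti s s0 hs_pos hle; linarith
      · have hsp : h s0 = max (sSup (f '' Icc s0 s)) (h s) := hsplit s0 s hs0 hle
        have hIcc : sSup (f '' Icc s0 s) ≤ f s0 + ε/2 := by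
          apply csSup_le ((nonempty_Icc.mpr hle).image f)
          rintro x ⟨t, ht, rfl⟩
          have : |t - s0| < δ := by
            rw [abs_lt] at hsδ ⊢; constructor <;> [linarith [ht.1]; linarith [ht.2]]
          have := hfnear t this
          rw [abs_lt] at this; linarith
        have hfs : f s0 < f s + ε/2 := by
          have := hfnear s hsδ; rw [abs_lt] at this; linarith
        have : h s0 ≤ max (f s0 + ε/2) (h s) := by
          rw [hsp]; exact max_le_max hIcc le_rfl
        have h1 : f s0 + ε/2 < h s + ε := by
          have := h_ge s hs_pos; linarith
        have h2 : max (f s0 + ε/2) (h s) < h s + ε := max_lt h1 (by linarith)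
        linarith
    · -- h s - h s0 < ε
      rcases le_total s0 s with hle | hle
      · have := h_anti s0 s hs0 hle; linarith
      · have hsp : h s = max (sSup (f '' Icc s s0)) (h s0) := hsplit s s0 hs_pos hle
        have hIcc : sSup (f '' Icc s s0) ≤ f s0 + ε/2 := by
          apply csSup_le ((nonempty_Icc.mpr hle).image f)
          rintro x ⟨t, ht, rfl⟩
          have : |t - s0| < δ := by
            rw [abs_lt] at hsδ ⊢; constructor <;> [linarith [ht.1]; linarith [ht.2]]
          have := hfnear t this
          rw [abs_lt] at this; linarith
        have : h s ≤ max (f s0 + ε/2) (h s0) := by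
          rw [hsp]; exact max_le_max hIcc le_rfl
        have h1 : f s0 + ε/2 < h s0 + ε := by
          have := h_ge s0 hs0; linarith
        have h2 : max (f s0 + ε/2) (h s0) < h s0 + ε := max_lt h1 (by linarith)
        linarith
  have hrw : ∀ s : ℝ, 0 < s → ghat s / s ^ (p-1) = h s + (s ^ (p-1))⁻¹ := by
    intro s hs
    rw [hghat s hs]
    rw [show sSup (f '' Ici s) = h s from rfl]
    field_simp
  refine ⟨?_, ?_, ?_, ?_⟩
  · -- continuity of ghat
    have : ContinuousOn (fun s : ℝ => s ^ (p-1) * h s + 1) (Ioi 0) := by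
      apply ContinuousOn.add _ continuousOn_const
      apply ContinuousOn.mul
      · exact fun x hx => (Real.continuousAt_rpow_const x _ (Or.inl (ne_of_gt hx))).continuousWithinAt
      · exact fun x hx => (hcont_h x hx).continuousWithinAt
    exact this.congr (fun s hs => hghat s hs)
  · intro s hs
    rw [hghat s hs]
    have : g s = s ^ (p-1) * f s := by
      rw [hfdef]; field_simp
    rw [this]
    have := mul_le_mul_of_nonneg_left (h_ge s hs) (hpow_pos s hs).le
    linarith
  · intro x hx y hy hxy
    simp only [mem_Ioi] at hx hy
    simp only [hrw x hx, hrw y hy]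
    have h1 : h y ≤ h x := h_anti x y hx hxy.le
    have h2 : (y ^ (p-1))⁻¹ < (x ^ (p-1))⁻¹ := by
      apply inv_strictAnti₀ (hpow_pos x hx)
      exact Real.rpow_lt_rpow hx.le hxy (by linarith)
    linarith
  · -- limit
    set k : ℝ → ℝ := fun s => h (max 1 s) with hkdef
    have hk_anti : Antitone k := fun a b hab =>
      h_anti _ _ (lt_of_lt_of_le one_pos (le_max_left _ _)) (max_le_max le_rfl hab)
    have hk_bdd : BddBelow (range k) := by
      refine ⟨0, ?_⟩
      rintro x ⟨s, rfl⟩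
      have hpos : (0:ℝ) < max 1 s := lt_of_lt_of_le one_pos (le_max_left _ _)
      exact le_trans (hf_nonneg _ hpos) (h_ge _ hpos)
    have hk : Tendsto k atTop (𝓝 (⨅ s, k s)) := tendsto_atTop_ciInf hk_anti hk_bdd
    have hr : Tendsto (fun s : ℝ => s ^ (-(p-1))) atTop (𝓝 0) :=
      tendsto_rpow_neg_atTop (by linarith)
    refine ⟨(⨅ s, k s) + 0, Tendsto.congr' ?_ (hk.add hr)⟩
    filter_upwards [eventually_ge_atTop (1:ℝ)] with s hs1
    have hs : (0:ℝ) < s := lt_of_lt_of_le one_pos hs1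
    have : k s = h s := by rw [hkdef]; simp [max_eq_right hs1]
    rw [this, hrw s hs, Real.rpow_neg hs.le]
end

section
/- Let 1<p<∞ and let f:[0,∞)→[0,∞) be continuous with lim_{s→0⁺} f(s)/s^{p-1} = 0 and lim_{s→∞} f(s)/s^{p-1} = ∞. Define f̂(s) = s^{p-1}·inf{ f(t)/t^{p-1} : t ≥ s } for s > 0. Then f̂ is continuous, f̂(s) ≤ f(s) for all s > 0, s ↦ f̂(s)/s^{p-1} is nondecreasing on (0,∞), lim_{s→0⁺} f̂(s)/s^{p-1} = 0, and lim_{s→∞} f̂(s)/s^{p-1} = ∞. -/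
open Real Filter Set Topology

/-- properties of `f̂(s) = s^(p-1) * inf_{t≥s} f(t)/t^(p-1)`. -/
theorem stmt_2 (p : ℝ) (hp : 1 < p) (f : ℝ → ℝ)
    (hf_cont : ContinuousOn f (Set.Ici 0))
    (hf_nonneg : ∀ s, 0 ≤ s → 0 ≤ f s)
    (hf0 : Tendsto (fun s => f s / s ^ (p - 1)) (nhdsWithin 0 (Set.Ioi 0)) (nhds 0))
    (hfinf : Tendsto (fun s => f s / s ^ (p - 1)) atTop atTop)
    (fhat : ℝ → ℝ)
    (hfhat : ∀ s, 0 < s →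
      fhat s = s ^ (p - 1) * sInf ((fun t => f t / t ^ (p - 1)) '' Set.Ici s)) :
    ContinuousOn fhat (Set.Ioi 0) ∧
    (∀ s, 0 < s → fhat s ≤ f s) ∧
    MonotoneOn (fun s => fhat s / s ^ (p - 1)) (Set.Ioi 0) ∧
    Tendsto (fun s => fhat s / s ^ (p - 1)) (nhdsWithin 0 (Set.Ioi 0)) (nhds 0) ∧
    Tendsto (fun s => fhat s / s ^ (p - 1)) atTop atTop := by
  set g : ℝ → ℝ := fun t => f t / t ^ (p - 1) with hg_def
  have hgpos : ∀ t : ℝ, 0 < t → (0:ℝ) < t ^ (p-1) := fun t ht => Real.rpow_pos_of_pos ht _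
  have hg_nonneg : ∀ t : ℝ, 0 < t → 0 ≤ g t := fun t ht =>
    div_nonneg (hf_nonneg t ht.le) (hgpos t ht).le
  have hg_cont : ContinuousOn g (Set.Ioi 0) := by
    apply ContinuousOn.div (hf_cont.mono (Set.Ioi_subset_Ici le_rfl))
    · exact fun t ht =>
        (Real.continuousAt_rpow_const t (p-1) (Or.inl (ne_of_gt ht))).continuousWithinAt
    · exact fun t ht => (hgpos t ht).ne'
  set m : ℝ → ℝ := fun s => sInf (g '' Set.Ici s) with hm_def
  have hmem : ∀ s t : ℝ, s ≤ t → g t ∈ g '' Set.Ici s := fun s t h =>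
    Set.mem_image_of_mem g (Set.mem_Ici.2 h)
  have hne : ∀ s : ℝ, (g '' Set.Ici s).Nonempty := fun s => ⟨g s, hmem s s le_rfl⟩
  have hbdd : ∀ s : ℝ, 0 < s → BddBelow (g '' Set.Ici s) := by
    intro s hs
    refine ⟨0, ?_⟩
    rintro x ⟨t, ht, rfl⟩
    exact hg_nonneg t (lt_of_lt_of_le hs ht)
  have hm_nonneg : ∀ s : ℝ, 0 < s → 0 ≤ m s := fun s hs =>
    le_csInf (hne s) (by rintro x ⟨t, ht, rfl⟩; exact hg_nonneg t (lt_of_lt_of_le hs ht))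
  have hm_le' : ∀ s t : ℝ, 0 < s → s ≤ t → m s ≤ g t := fun s t hs hst =>
    csInf_le (hbdd s hs) (hmem s t hst)
  have hm_le : ∀ s : ℝ, 0 < s → m s ≤ g s := fun s hs => hm_le' s s hs le_rfl
  have hm_mono : ∀ s t : ℝ, 0 < s → s ≤ t → m s ≤ m t := fun s t hs hst =>
    csInf_le_csInf (hbdd s hs) (hne t) (Set.image_mono (Set.Ici_subset_Ici.2 hst))
  have hq : ∀ s : ℝ, 0 < s → fhat s / s ^ (p-1) = m s := by
    intro s hs
    rw [hfhat s hs, mul_div_cancel_left₀ _ (hgpos s hs).ne']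
  have hm_cont : ContinuousOn m (Set.Ioi 0) := by
    intro s hs
    have hs' : (0:ℝ) < s := hs
    have hgat : ContinuousAt g s := hg_cont.continuousAt (Ioi_mem_nhds hs')
    rw [Metric.continuousWithinAt_iff]
    intro ε hε
    obtain ⟨δ1, hδ1, hδ1'⟩ := Metric.continuousAt_iff.1 hgat (ε/2) (by linarith)
    have hu : ∃ u, s < u ∧ g u < m s + ε/2 := by
      obtain ⟨x, ⟨u, hu1, rfl⟩, hx⟩ :=
        exists_lt_of_csInf_lt (hne s) (show m s < m s + ε/2 by linarith)
      rcases lt_or_eq_of_le (Set.mem_Ici.1 hu1) with h | h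
      · exact ⟨u, h, hx⟩
      · subst h
        have hη : (0:ℝ) < m s + ε/2 - g s := by linarith
        obtain ⟨δ', hδ', hδ''⟩ := Metric.continuousAt_iff.1 hgat _ hη
        refine ⟨s + δ'/2, by linarith, ?_⟩
        have hd : dist (s + δ'/2) s < δ' := by
          rw [Real.dist_eq]
          rw [show s + δ'/2 - s = δ'/2 by ring, abs_of_pos (by linarith)]
          linarith
        have := hδ'' hd
        rw [Real.dist_eq, abs_lt] at this
        linarith [this.2]
    obtain ⟨u, hus, hgu⟩ := hu
    refine ⟨min (min δ1 (u - s)) (s/2), lt_min (lt_min hδ1 (by linarith)) (by linarith), ?_⟩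
    intro t ht hdist
    have ht0 : (0:ℝ) < t := ht
    rw [Real.dist_eq] at hdist
    have hd1 : |t - s| < δ1 := lt_of_lt_of_le hdist (le_trans (min_le_left _ _) (min_le_left _ _))
    have hd2 : |t - s| < u - s := lt_of_lt_of_le hdist (le_trans (min_le_left _ _) (min_le_right _ _))
    rcases le_or_gt t s with hts | hts
    · -- t ≤ s : m t ≤ m s and m s - ε/2 ≤ m t
      have h1 : m t ≤ m s := hm_mono t s ht0 hts
      have h2 : m s - ε/2 ≤ m t := by
        apply le_csInf (hne t)
        rintro x ⟨v, hv, rfl⟩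
        have hv' : t ≤ v := hv
        rcases le_or_gt s v with hsv | hsv
        · have := hm_le' s v hs' hsv
          linarith
        · have hvd : dist v s < δ1 := by
            rw [Real.dist_eq, abs_of_nonpos (by linarith)]
            rw [abs_lt] at hd1
            linarith [hd1.1, hv']
          have := hδ1' hvd
          rw [Real.dist_eq, abs_lt] at this
          have hms : m s ≤ g s := hm_le s hs'
          linarith [this.1]
      rw [Real.dist_eq, abs_lt]
      constructor <;> linarith
    · -- s < t : m s ≤ m t ≤ g u < m s + ε/2
      have h1 : m s ≤ m t := hm_mono s t hs' hts.le
      have h2 : m t ≤ g u := by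
        apply hm_le' t u ht0
        rw [abs_lt] at hd2
        linarith [hd2.2]
      rw [Real.dist_eq, abs_lt]
      constructor <;> linarith
  refine ⟨?_, ?_, ?_, ?_, ?_⟩
  · -- continuity of fhat
    have hc : ContinuousOn (fun s : ℝ => s ^ (p-1) * m s) (Set.Ioi 0) := by
      apply ContinuousOn.mul _ hm_cont
      exact fun t ht =>
        (Real.continuousAt_rpow_const t (p-1) (Or.inl (ne_of_gt ht))).continuousWithinAt
    exact hc.congr (fun s hs => hfhat s hs)
  · intro s hs
    rw [hfhat s hs]
    calc s ^ (p-1) * m s ≤ s ^ (p-1) * g s :=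
          mul_le_mul_of_nonneg_left (hm_le s hs) (hgpos s hs).le
      _ = f s := by
          rw [hg_def]
          field_simp
  · intro a ha b hb hab
    simp only
    rw [hq a ha, hq b hb]
    exact hm_mono a b ha hab
  · have heq : ∀ᶠ s in nhdsWithin (0:ℝ) (Set.Ioi 0), m s = fhat s / s ^ (p-1) :=
      eventually_mem_nhdsWithin.mono (fun s hs => (hq s hs).symm)
    apply Filter.Tendsto.congr' heq
    apply squeeze_zero'
    · exact eventually_mem_nhdsWithin.mono (fun s hs => hm_nonneg s hs)
    · exact eventually_mem_nhdsWithin.mono (fun s hs => hm_le s hs)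
    · exact hf0
  · rw [tendsto_atTop]
    intro M
    obtain ⟨T, hT⟩ := eventually_atTop.1 (tendsto_atTop.1 hfinf M)
    filter_upwards [eventually_ge_atTop (max T 1)] with s hs
    have hs0 : (0:ℝ) < s := lt_of_lt_of_le one_pos (le_trans (le_max_right T 1) hs)
    rw [hq s hs0]
    apply le_csInf (hne s)
    rintro x ⟨v, hv, rfl⟩
    exact hT v (le_trans (le_trans (le_max_left T 1) hs) hv)
end

section
/- Define f(t) = σ(t)·t^{p-1} for 0<t<1 and f(t) = t^{p-1} e^{-t} for t ≥ 1, where p>1 and σ ≥ 0 is continuous with σ(1) = e^{-1} and lim_{t→0⁺} σ(t) = 0. Then liminf_{s→∞} [inf{ f(t)/t^{p-1} : t ≥ s }] / [f(s)/s^{p-1}] = 0, and f does not satisfy the Keller–Osserman condition ∫_1^∞ F(t)^{-1/p} dt < ∞ where F(t)=∫_0^t f(τ)dτ. -/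
open Real Filter Set Topology MeasureTheory intervalIntegral

/-- the counterexample `f(t) = σ(t) t^(p-1)` for `0<t<1`, `f(t) = t^(p-1) e^{-t}`
for `t ≥ 1` has liminf equal to 0 in condition `(f₀)` and fails the Keller–Osserman condition. -/
theorem stmt_3 (p : ℝ) (hp : 1 < p) (σ f : ℝ → ℝ)
    (hσ_cont : ContinuousOn σ (Set.Ioc 0 1))
    (hσ_nonneg : ∀ t ∈ Set.Ioc (0:ℝ) 1, 0 ≤ σ t)
    (hσ1 : σ 1 = Real.exp (-1))
    (hσ0 : Tendsto σ (nhdsWithin 0 (Set.Ioi 0)) (nhds 0))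
    (hf_lt : ∀ t : ℝ, 0 < t → t < 1 → f t = σ t * t ^ (p - 1))
    (hf_ge : ∀ t : ℝ, 1 ≤ t → f t = t ^ (p - 1) * Real.exp (-t)) :
    Filter.liminf
      (fun s => sInf ((fun t => f t / t ^ (p - 1)) '' Set.Ici s) / (f s / s ^ (p - 1)))
      atTop = 0 ∧
    ¬ IntegrableOn (fun t => (∫ τ in (0:ℝ)..t, f τ) ^ (-(1:ℝ) / p)) (Set.Ici 1) := by
  have hp0 : (0:ℝ) < p := lt_trans one_pos hp
  have hp1 : (0:ℝ) ≤ p - 1 := by linarith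
  constructor
  · -- liminf part
    have h0 : ∀ᶠ s in atTop,
        (sInf ((fun t => f t / t ^ (p - 1)) '' Set.Ici s) / (f s / s ^ (p - 1))) = 0 := by
      filter_upwards [eventually_ge_atTop (1:ℝ)] with s hs
      have himg : (fun t => f t / t ^ (p - 1)) '' Set.Ici s
          = (fun t => Real.exp (-t)) '' Set.Ici s := by
        apply Set.image_congr
        intro t ht
        have ht1 : (1:ℝ) ≤ t := hs.trans ht
        have htpos : (0:ℝ) < t := lt_of_lt_of_le one_pos ht1
        have hne : t ^ (p - 1) ≠ 0 := (Real.rpow_pos_of_pos htpos _).ne'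
        rw [hf_ge t ht1, mul_comm, mul_div_assoc, div_self hne, mul_one]
      rw [himg]
      have hbd : BddBelow ((fun t => Real.exp (-t)) '' Set.Ici s) := by
        refine ⟨0, ?_⟩
        rintro x ⟨t, -, rfl⟩
        exact (Real.exp_pos _).le
      have hInf : sInf ((fun t => Real.exp (-t)) '' Set.Ici s) = 0 := by
        refine le_antisymm ?_ (le_csInf ⟨_, ⟨s, le_refl s, rfl⟩⟩ ?_)
        · refine ge_of_tendsto (Real.tendsto_exp_neg_atTop_nhds_zero) ?_
          filter_upwards [eventually_ge_atTop s] with t ht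
          exact csInf_le hbd ⟨t, ht, rfl⟩
        · rintro b ⟨t, -, rfl⟩
          exact (Real.exp_pos _).le
      rw [hInf, zero_div]
    rw [Filter.liminf_congr h0]
    exact Filter.liminf_const 0
  · -- Keller–Osserman part
    intro hInt
    -- f is continuous on [1, ∞)
    have hgc : ContinuousOn (fun τ : ℝ => τ ^ (p - 1) * Real.exp (-τ)) (Set.Ici 1) := by
      refine (ContinuousOn.rpow_const continuousOn_id fun x hx => Or.inr hp1).mul ?_
      exact (Real.continuous_exp.comp continuous_neg).continuousOn
    have hfc1 : ContinuousOn f (Set.Ici 1) :=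
      hgc.congr fun t ht => hf_ge t ht
    have hInt1t : ∀ t : ℝ, 1 ≤ t → IntervalIntegrable f volume 1 t := by
      intro t ht
      refine (hfc1.mono ?_).intervalIntegrable
      rw [Set.uIcc_of_le ht]
      exact Set.Icc_subset_Ici_self
    -- f is nonneg on (0, 1] and on [1, ∞)
    have hfpos01 : ∀ t ∈ Set.Ioc (0:ℝ) 1, 0 ≤ f t := by
      intro t ht
      rcases eq_or_lt_of_le ht.2 with h1 | h1
      · rw [h1, hf_ge 1 le_rfl]
        positivity
      · rw [hf_lt t ht.1 h1]
        exact mul_nonneg (hσ_nonneg t ht) (Real.rpow_nonneg ht.1.le _)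
    have hfpos1 : ∀ t : ℝ, 1 ≤ t → 0 ≤ f t := by
      intro t ht
      rw [hf_ge t ht]
      positivity
    -- bound for σ near 0
    obtain ⟨δ, hδpos, hδ⟩ := Metric.tendsto_nhdsWithin_nhds.mp hσ0 1 one_pos
    set a : ℝ := min δ 1 with ha
    have hapos : 0 < a := lt_min hδpos one_pos
    have ha1 : a ≤ 1 := min_le_right _ _
    obtain ⟨C, hC⟩ := (isCompact_Icc (a := a) (b := 1)).exists_bound_of_continuousOn
      (hσ_cont.mono fun x hx => ⟨lt_of_lt_of_le hapos hx.1, hx.2⟩)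
    have hσbd : ∀ t ∈ Set.Ioo (0:ℝ) 1, |σ t| ≤ max 1 C := by
      intro t ht
      rcases lt_or_ge t a with h | h
      · have : dist (σ t) 0 < 1 := hδ ht.1 (by
          rw [Real.dist_eq, sub_zero, abs_of_pos ht.1]
          exact lt_of_lt_of_le h (min_le_left _ _))
        rw [Real.dist_eq, sub_zero] at this
        exact le_max_of_le_left this.le
      · exact le_max_of_le_right (hC t ⟨h, ht.2.le⟩)
    have hfbd : ∀ t ∈ Set.Ioo (0:ℝ) 1, ‖f t‖ ≤ max 1 C := by
      intro t ht
      rw [hf_lt t ht.1 ht.2, Real.norm_eq_abs, abs_mul,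
        abs_of_nonneg (Real.rpow_nonneg ht.1.le _)]
      calc |σ t| * t ^ (p - 1) ≤ |σ t| * 1 := by
            exact mul_le_mul_of_nonneg_left
              (Real.rpow_le_one ht.1.le ht.2.le hp1) (abs_nonneg _)
        _ = |σ t| := mul_one _
        _ ≤ max 1 C := hσbd t ht
    have hfcIoo : ContinuousOn f (Set.Ioo 0 1) := by
      have h1 : ContinuousOn (fun t : ℝ => σ t * t ^ (p - 1)) (Set.Ioo 0 1) :=
        (hσ_cont.mono fun x hx => ⟨hx.1, hx.2.le⟩).mul
          (ContinuousOn.rpow_const continuousOn_id fun x hx => Or.inr hp1)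
      exact h1.congr fun t ht => hf_lt t ht.1 ht.2
    have hInt01 : IntervalIntegrable f volume 0 1 := by
      rw [intervalIntegrable_iff_integrableOn_Ioo_of_le zero_le_one]
      refine ⟨hfcIoo.aestronglyMeasurable measurableSet_Ioo, ?_⟩
      refine HasFiniteIntegral.restrict_of_bounded (C := max 1 C) (by simp) ?_
      exact (ae_restrict_iff' measurableSet_Ioo).mpr (ae_of_all _ hfbd)
    -- A = ∫_0^1 f ≥ 0
    set A : ℝ := ∫ τ in (0:ℝ)..1, f τ with hA
    have hA0 : 0 ≤ A := by
      refine intervalIntegral.integral_nonneg_of_ae_restrict zero_le_one ?_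
      rw [← Measure.restrict_congr_set MeasureTheory.Ioc_ae_eq_Icc]
      exact (ae_restrict_iff' measurableSet_Ioc).mpr (ae_of_all _ hfpos01)
    -- B = Gamma-type integral
    set B : ℝ := ∫ x in Set.Ioi (0:ℝ), Real.exp (-x) * x ^ (p - 1) with hB
    have hΓ : IntegrableOn (fun x : ℝ => Real.exp (-x) * x ^ (p - 1)) (Set.Ioi 0) :=
      Real.GammaIntegral_convergent hp0
    have hup : ∀ t : ℝ, 1 ≤ t → (∫ τ in (1:ℝ)..t, f τ) ≤ B := by
      intro t ht
      rw [intervalIntegral.integral_of_le ht]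
      have hcongr : Set.EqOn f (fun τ => Real.exp (-τ) * τ ^ (p - 1)) (Set.Ioc 1 t) := by
        intro τ hτ
        rw [hf_ge τ hτ.1.le, mul_comm]
      rw [setIntegral_congr_fun measurableSet_Ioc hcongr]
      refine setIntegral_mono_set hΓ ?_ ?_
      · refine (ae_restrict_iff' measurableSet_Ioi).mpr (ae_of_all _ fun x hx => ?_)
        exact mul_nonneg (Real.exp_pos _).le (Real.rpow_nonneg (le_of_lt hx) _)
      · exact (Set.Ioc_subset_Ioi_self.trans (Set.Ioi_subset_Ioi zero_le_one)).eventuallyLE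
    have hlow : ∀ t : ℝ, 2 ≤ t → Real.exp (-2) ≤ ∫ τ in (1:ℝ)..t, f τ := by
      intro t ht
      have h12 : IntervalIntegrable f volume 1 2 := hInt1t 2 one_le_two
      have h2t : IntervalIntegrable f volume 2 t := by
        refine (hfc1.mono ?_).intervalIntegrable
        rw [Set.uIcc_of_le ht]
        exact fun x hx => le_trans one_le_two hx.1
      rw [← intervalIntegral.integral_add_adjacent_intervals h12 h2t]
      have hone : Real.exp (-2) ≤ ∫ τ in (1:ℝ)..2, f τ := by
        have := intervalIntegral.integral_mono_on (μ := volume) one_le_two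
          (_root_.intervalIntegrable_const (c := Real.exp (-2))) h12
          (fun x hx => by
            rw [hf_ge x hx.1]
            calc Real.exp (-2) = 1 * Real.exp (-2) := (one_mul _).symm
              _ ≤ x ^ (p - 1) * Real.exp (-x) :=
                mul_le_mul (Real.one_le_rpow hx.1 hp1)
                  (Real.exp_le_exp.mpr (by linarith [hx.2])) (Real.exp_pos _).le
                  (Real.rpow_nonneg (by linarith [hx.1]) _))
        norm_num at this
        exact this
      have htwo : 0 ≤ ∫ τ in (2:ℝ)..t, f τ :=
        intervalIntegral.integral_nonneg ht fun u hu => hfpos1 u (by linarith [hu.1])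
      linarith
    -- F bounds for t ≥ 2
    have hF : ∀ t : ℝ, 2 ≤ t →
        Real.exp (-2) ≤ (∫ τ in (0:ℝ)..t, f τ) ∧ (∫ τ in (0:ℝ)..t, f τ) ≤ A + B := by
      intro t ht
      have ht1 : (1:ℝ) ≤ t := le_trans one_le_two ht
      have hsplit : (∫ τ in (0:ℝ)..t, f τ) = A + ∫ τ in (1:ℝ)..t, f τ :=
        (intervalIntegral.integral_add_adjacent_intervals hInt01 (hInt1t t ht1)).symm
      rw [hsplit]
      constructor
      · linarith [hlow t ht]
      · linarith [hup t ht1]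
    have hM : 0 < A + B := lt_of_lt_of_le (Real.exp_pos _)
      (le_trans (hF 2 le_rfl).1 (hF 2 le_rfl).2)
    -- the constant (A+B)^(-1/p) is a positive lower bound on [2, ∞)
    have h2 : IntegrableOn (fun t => (∫ τ in (0:ℝ)..t, f τ) ^ (-(1:ℝ) / p)) (Set.Ici 2) :=
      hInt.mono_set (Set.Ici_subset_Ici.mpr one_le_two)
    have hconst : IntegrableOn (fun _ : ℝ => (A + B) ^ (-(1:ℝ) / p)) (Set.Ici 2) := by
      refine Integrable.mono h2 aestronglyMeasurable_const ?_
      refine (ae_restrict_iff' measurableSet_Ici).mpr (ae_of_all _ fun t ht => ?_)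
      obtain ⟨hl, hu'⟩ := hF t ht
      have hFpos : 0 < ∫ τ in (0:ℝ)..t, f τ := lt_of_lt_of_le (Real.exp_pos _) hl
      rw [Real.norm_eq_abs, Real.norm_eq_abs, abs_of_nonneg (Real.rpow_nonneg hM.le _),
        abs_of_nonneg (Real.rpow_nonneg hFpos.le _)]
      exact Real.rpow_le_rpow_of_nonpos hFpos hu'
        (by rw [neg_div]; exact neg_nonpos.mpr (by positivity))
    rw [integrableOn_const_iff] at hconst
    rcases hconst with h | h
    · exact absurd (enorm_eq_zero.mp h) (Real.rpow_pos_of_pos hM _).ne'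
    · simp at h
end

section
/- Let p>1, m ≤ p-1 < q, γ ≤ 0 real numbers, η = (p−1−m)(p−γ)/(q−p+1) + p, α = (p−γ)/(q−p+1), and let A>0 satisfy Q·A^{q-m} − (p−1)α^{p-1}(1+α)·A^{p−m−1} − R = 0, where Q>0, R≥0. Then the function u₀(x) = A·x^{−α} on (0,∞) satisfies −(|u₀'|^{p−2}u₀')' = R·x^{−η}·u₀^m − Q·x^{−γ}·u₀^q for all x > 0. -/
open Real

/-- `u₀(x) = A x^(-α)` solves the one-dimensional `p`-Laplacian equation
`-(|u₀'|^(p-2) u₀')' = R x^(-η) u₀^m - Q x^(-γ) u₀^q` on `(0,∞)`. -/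
theorem stmt_6 (p m q γ η α Q R A : ℝ)
    (hp : 1 < p) (hm : m ≤ p - 1) (hq : p - 1 < q) (hγ : γ ≤ 0)
    (hη : η = (p - 1 - m) * (p - γ) / (q - p + 1) + p)
    (hα : α = (p - γ) / (q - p + 1)) (hQ : 0 < Q) (hR : 0 ≤ R) (hA : 0 < A)
    (heq : Q * A ^ (q - m) - (p - 1) * α ^ (p - 1) * (1 + α) * A ^ (p - m - 1) - R = 0) :
    ∀ x : ℝ, 0 < x →
      -(deriv (fun y : ℝ =>
          |deriv (fun z : ℝ => A * z ^ (-α)) y| ^ (p - 2) * deriv (fun z : ℝ => A * z ^ (-α)) y) x)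
        = R * x ^ (-η) * (A * x ^ (-α)) ^ m - Q * x ^ (-γ) * (A * x ^ (-α)) ^ q := by
  intro x hx
  have hqp : (0:ℝ) < q - p + 1 := by linarith
  have hαpos : 0 < α := by
    rw [hα]; exact div_pos (by linarith) hqp
  have hcpos : 0 < A * α := mul_pos hA hαpos
  -- the flux function coincides with a power function near x
  have hFeq : (fun y : ℝ =>
        |deriv (fun z : ℝ => A * z ^ (-α)) y| ^ (p - 2) * deriv (fun z : ℝ => A * z ^ (-α)) y)
      =ᶠ[nhds x] fun y : ℝ => -((A * α) ^ (p - 1)) * y ^ ((-α - 1) * (p - 1)) := by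
    filter_upwards [Ioi_mem_nhds hx] with y hy
    have hy : (0:ℝ) < y := hy
    have hd : deriv (fun z : ℝ => A * z ^ (-α)) y = A * (-α * y ^ (-α - 1)) :=
      ((Real.hasDerivAt_rpow_const (p := -α) (Or.inl hy.ne')).const_mul A).deriv
    have hyp : (0:ℝ) < y ^ (-α - 1) := Real.rpow_pos_of_pos hy _
    have habs : |A * (-α * y ^ (-α - 1))| = A * α * y ^ (-α - 1) := by
      rw [abs_of_nonpos (by nlinarith)]; ring
    rw [hd, habs, Real.mul_rpow hcpos.le hyp.le, ← Real.rpow_mul hy.le]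
    have e1 : (A * α) ^ (p - 1) = (A * α) ^ (p - 2) * (A * α) := by
      rw [show p - 1 = p - 2 + 1 by ring, Real.rpow_add_one hcpos.ne']
    have e2 : y ^ ((-α - 1) * (p - 1)) = y ^ ((-α - 1) * (p - 2)) * y ^ (-α - 1) := by
      rw [show (-α - 1) * (p - 1) = (-α - 1) * (p - 2) + (-α - 1) by ring, Real.rpow_add hy]
    rw [e1, e2]; ring
  rw [hFeq.deriv_eq]
  have hdg : deriv (fun y : ℝ => -((A * α) ^ (p - 1)) * y ^ ((-α - 1) * (p - 1))) x
      = -((A * α) ^ (p - 1)) * ((-α - 1) * (p - 1) * x ^ ((-α - 1) * (p - 1) - 1)) :=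
    ((Real.hasDerivAt_rpow_const (p := (-α - 1) * (p - 1)) (Or.inl hx.ne')).const_mul
      (-((A * α) ^ (p - 1)))).deriv
  rw [hdg]
  -- rewrite the right-hand side
  have hxα : (0:ℝ) < x ^ (-α) := Real.rpow_pos_of_pos hx _
  have hrm : (A * x ^ (-α)) ^ m = A ^ m * x ^ (-α * m) := by
    rw [Real.mul_rpow hA.le hxα.le, ← Real.rpow_mul hx.le]
  have hrq : (A * x ^ (-α)) ^ q = A ^ q * x ^ (-α * q) := by
    rw [Real.mul_rpow hA.le hxα.le, ← Real.rpow_mul hx.le]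
  have hexp1 : -η + -α * m = (-α - 1) * (p - 1) - 1 := by
    subst hη hα; field_simp; ring
  have hexp2 : -γ + -α * q = (-α - 1) * (p - 1) - 1 := by
    subst hα; field_simp; ring
  have h3 : x ^ (-η) * x ^ (-α * m) = x ^ ((-α - 1) * (p - 1) - 1) := by
    rw [← Real.rpow_add hx, hexp1]
  have h4 : x ^ (-γ) * x ^ (-α * q) = x ^ ((-α - 1) * (p - 1) - 1) := by
    rw [← Real.rpow_add hx, hexp2]
  have hAq : A ^ q = A ^ (q - m) * A ^ m := by
    rw [← Real.rpow_add hA]; congr 1; ring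
  have hAp : A ^ (p - 1) = A ^ (p - m - 1) * A ^ m := by
    rw [← Real.rpow_add hA]; congr 1; ring
  have key : Q * A ^ q - R * A ^ m = (p - 1) * α ^ (p - 1) * (1 + α) * A ^ (p - 1) := by
    rw [hAq, hAp]; linear_combination A ^ m * heq
  have hmulc : (A * α) ^ (p - 1) = A ^ (p - 1) * α ^ (p - 1) :=
    Real.mul_rpow hA.le hαpos.le
  rw [hrm, hrq, hmulc]
  linear_combination (-(R * A ^ m)) * h3 + (Q * A ^ q) * h4 + x ^ ((-α - 1) * (p - 1) - 1) * key
end
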